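/- arXiv:2012.03821 — 8 statements merged into one kernel-verified Lean document; each statement's English description precedes it below -/
import Mathlib

section
/- Let E be a real Banach space, P : E → E* a bounded symmetric linear operator (i.e. ⟨v₁, P v₂⟩ = ⟨v₂, P v₁⟩ for all v₁, v₂ ∈ E), and suppose E = E⁺ ⊕ E⁻ is a direct sum decomposition such that ⟨v, Pv⟩ > 0 for all nonzero v ∈ E⁺ and ⟨v, Pv⟩ < 0 for all nonzero v ∈ E⁻, with E⁻ finite-dimensional. Then there exists a unique bounded linear projector Π : E → E⁻ with range E⁻ such that ⟨w, Pv⟩ = ⟨w, P(Πv)⟩ for all w ∈ E⁻ and v ∈ E; moreover E = Ker Π ⊕ E⁻, the quadratic form V(v) := ⟨v, Pv⟩ satisfies V(v) = V(v − Πv) + V(Πv) for all v ∈ E, and P is positive on Ker Π. -/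
/-!
The form `P` is negative definite, hence nondegenerate, on the finite-dimensional space `E⁻`,
so `m ↦ P m ·|_{E⁻}` is an isomorphism of `E⁻` onto its dual. `Π v` is the preimage of
`P v ·|_{E⁻}`; it is continuous because the inverse of a linear isomorphism between
finite-dimensional spaces is. On `Ker Π` the vectors are `P`-orthogonal to `E⁻`, and writing
`v = p + m` with `p ∈ E⁺`, `m ∈ E⁻` this orthogonality gives `V(v) = V(p) - V(m) > 0`.
-/
namespace ContinuousLinearMap

section

variable {𝕜 E : Type*} [NontriviallyNormedField 𝕜] [NormedAddCommGroup E] [NormedSpace 𝕜 E]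

def NondegenerateOn (B : E →L[𝕜] E →L[𝕜] 𝕜) (F : Submodule 𝕜 E) : Prop :=
  ∀ x ∈ F, (∀ w ∈ F, B x w = 0) → x = 0

noncomputable def restrictRight (B : E →L[𝕜] E →L[𝕜] 𝕜) (F : Submodule 𝕜 E) :
    E →L[𝕜] F →L[𝕜] 𝕜 :=
  (compL 𝕜 F E 𝕜).flip F.subtypeL ∘L B

@[simp]
theorem restrictRight_apply (B : E →L[𝕜] E →L[𝕜] 𝕜) (F : Submodule 𝕜 E) (v : E) (w : F) :
    B.restrictRight F v w = B v w :=
  rfl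

namespace NondegenerateOn

variable {B : E →L[𝕜] E →L[𝕜] 𝕜} {F : Submodule 𝕜 E}

theorem eq_of_forall_apply_eq (hB : B.NondegenerateOn F) {x y : E} (hx : x ∈ F) (hy : y ∈ F)
    (h : ∀ w ∈ F, B x w = B y w) : x = y :=
  sub_eq_zero.mp <| hB _ (F.sub_mem hx hy) fun w hw => by simp [h w hw]

theorem injective_restrictRight_comp_subtypeL (hB : B.NondegenerateOn F) :
    Function.Injective (B.restrictRight F ∘L F.subtypeL) := fun x y h =>
  Subtype.ext <| hB.eq_of_forall_apply_eq x.2 y.2 fun w hw => congr($h ⟨w, hw⟩)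

variable [CompleteSpace 𝕜] [FiniteDimensional 𝕜 F]

noncomputable def restrictEquiv (hB : B.NondegenerateOn F) : F ≃ₗ[𝕜] (F →L[𝕜] 𝕜) :=
  LinearMap.linearEquivOfInjective (B.restrictRight F ∘L F.subtypeL).toLinearMap
    hB.injective_restrictRight_comp_subtypeL <| by
      rw [← LinearMap.toContinuousLinearMap.finrank_eq, Subspace.dual_finrank_eq]

noncomputable def proj (hB : B.NondegenerateOn F) : E →L[𝕜] E :=
  F.subtypeL ∘L hB.restrictEquiv.toContinuousLinearEquiv.symm.toContinuousLinearMap ∘L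
    B.restrictRight F

variable (hB : B.NondegenerateOn F)

theorem proj_mem (v : E) : hB.proj v ∈ F :=
  Subtype.prop _

theorem apply_proj (v : E) {w : E} (hw : w ∈ F) : B (hB.proj v) w = B v w := by
  have := hB.restrictEquiv.toContinuousLinearEquiv.apply_symm_apply (B.restrictRight F v)
  exact congr($this ⟨w, hw⟩)

theorem eq_proj_of_forall_apply_eq {v x : E} (hx : x ∈ F) (h : ∀ w ∈ F, B x w = B v w) :
    x = hB.proj v :=
  hB.eq_of_forall_apply_eq hx (hB.proj_mem v) fun w hw =>
    (h w hw).trans (hB.apply_proj v hw).symm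

theorem isProj_proj : LinearMap.IsProj F (hB.proj : E →ₗ[𝕜] E) where
  map_mem := hB.proj_mem
  map_id _ hv := (hB.eq_proj_of_forall_apply_eq hv fun _ _ => rfl).symm

theorem apply_sub_proj (v : E) {w : E} (hw : w ∈ F) : B (v - hB.proj v) w = 0 := by
  simp [hB.apply_proj v hw]

theorem apply_self_eq_add (hsymm : ∀ x y, B x y = B y x) (v : E) :
    B v v = B (v - hB.proj v) (v - hB.proj v) + B (hB.proj v) (hB.proj v) := by
  have h₁ : B (v - hB.proj v) (hB.proj v) = 0 := hB.apply_sub_proj v (hB.proj_mem v)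
  have h₂ : B (hB.proj v) (v - hB.proj v) = 0 := (hsymm _ _).trans h₁
  conv_lhs => rw [← sub_add_cancel v (hB.proj v)]
  simp only [map_add, add_apply, h₁, h₂]
  ring

end NondegenerateOn

end

section Real

variable {E : Type*} [NormedAddCommGroup E] [NormedSpace ℝ E]

theorem nondegenerateOn_of_apply_self_neg {B : E →L[ℝ] E →L[ℝ] ℝ} {F : Submodule ℝ E}
    (hneg : ∀ v ∈ F, v ≠ 0 → B v v < 0) : B.NondegenerateOn F := by
  intro x hx h
  by_contra hx0
  exact (hneg x hx hx0).ne (h x hx)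

theorem apply_self_pos_of_forall_apply_eq_zero {B : E →L[ℝ] E →L[ℝ] ℝ}
    (hsymm : ∀ x y, B x y = B y x) {Ep Em : Submodule ℝ E} (hcod : Codisjoint Ep Em)
    (hpos : ∀ v ∈ Ep, v ≠ 0 → 0 < B v v) (hneg : ∀ v ∈ Em, v ≠ 0 → B v v < 0)
    {v : E} (hv : ∀ w ∈ Em, B v w = 0) (hv0 : v ≠ 0) : 0 < B v v := by
  obtain ⟨p, m, hp, hm, rfl⟩ := Submodule.codisjoint_iff_exists_add_eq.mp hcod v
  have hpm : B p m = -B m m := by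
    have := hv m hm
    simp only [map_add, add_apply] at this
    linarith
  have hexpand : B (p + m) (p + m) = B p p - B m m := by
    simp only [map_add, add_apply, hsymm m p]
    linarith
  rw [hexpand]
  rcases eq_or_ne p 0 with rfl | hp0
  · have hm0 : m ≠ 0 := by simpa using hv0
    simpa using hneg m hm hm0
  · have hmm : B m m ≤ 0 := by
      rcases eq_or_ne m 0 with rfl | hm0
      · simp
      · exact (hneg m hm hm0).le
    linarith [hpos p hp hp0]

end Real

end ContinuousLinearMap

open ContinuousLinearMap in
theorem stmt_0_general {E : Type*} [NormedAddCommGroup E] [NormedSpace ℝ E]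
    (P : E →L[ℝ] E →L[ℝ] ℝ)
    (hsymm : ∀ v₁ v₂ : E, P v₂ v₁ = P v₁ v₂)
    (Ep Em : Submodule ℝ E) (hcompl : IsCompl Ep Em)
    (hfd : FiniteDimensional ℝ Em)
    (hpos : ∀ v ∈ Ep, v ≠ 0 → 0 < P v v)
    (hneg : ∀ v ∈ Em, v ≠ 0 → P v v < 0) :
    ∃ Pi : E →L[ℝ] E,
      ((∀ v : E, Pi v ∈ Em) ∧ (∀ w ∈ Em, ∀ v : E, P v w = P (Pi v) w)) ∧
      (∀ Pi' : E →L[ℝ] E,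
        ((∀ v : E, Pi' v ∈ Em) ∧ (∀ w ∈ Em, ∀ v : E, P v w = P (Pi' v) w)) → Pi' = Pi) ∧
      LinearMap.range (Pi : E →ₗ[ℝ] E) = Em ∧
      (∀ v ∈ Em, Pi v = v) ∧
      IsCompl (LinearMap.ker (Pi : E →ₗ[ℝ] E)) Em ∧
      (∀ v : E, P v v = P (v - Pi v) (v - Pi v) + P (Pi v) (Pi v)) ∧
      (∀ v : E, Pi v = 0 → v ≠ 0 → 0 < P v v) := by
  have hsymm' : ∀ x y, P x y = P y x := fun x y => hsymm y x
  have hB : P.NondegenerateOn Em := nondegenerateOn_of_apply_self_neg hneg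
  have hproj := hB.isProj_proj
  refine ⟨hB.proj, ⟨hB.proj_mem, fun w hw v => (hB.apply_proj v hw).symm⟩, ?_, hproj.range,
    hproj.map_id, hproj.isCompl.symm, hB.apply_self_eq_add hsymm', ?_⟩
  · rintro Pi' ⟨hmem', horth'⟩
    ext v
    exact hB.eq_proj_of_forall_apply_eq (hmem' v) fun w hw => (horth' w hw v).symm
  · intro v hv
    refine apply_self_pos_of_forall_apply_eq_zero hsymm' hcompl.codisjoint hpos hneg ?_
    intro w hw
    rw [← hB.apply_proj v hw, hv, map_zero, zero_apply]

/-- Existence and uniqueness of the V-orthogonal projector onto the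
finite-dimensional negative subspace of a symmetric bounded operator `P : E → E*`. -/
theorem stmt_0 {E : Type*} [NormedAddCommGroup E] [NormedSpace ℝ E] [CompleteSpace E]
    (P : E →L[ℝ] E →L[ℝ] ℝ)
    (hsymm : ∀ v₁ v₂ : E, P v₂ v₁ = P v₁ v₂)
    (Ep Em : Submodule ℝ E) (hcompl : IsCompl Ep Em)
    (hfd : FiniteDimensional ℝ Em)
    (hpos : ∀ v ∈ Ep, v ≠ 0 → 0 < P v v)
    (hneg : ∀ v ∈ Em, v ≠ 0 → P v v < 0) :
    ∃ Pi : E →L[ℝ] E,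
      ((∀ v : E, Pi v ∈ Em) ∧ (∀ w ∈ Em, ∀ v : E, P v w = P (Pi v) w)) ∧
      (∀ Pi' : E →L[ℝ] E,
        ((∀ v : E, Pi' v ∈ Em) ∧ (∀ w ∈ Em, ∀ v : E, P v w = P (Pi' v) w)) → Pi' = Pi) ∧
      LinearMap.range (Pi : E →ₗ[ℝ] E) = Em ∧
      (∀ v ∈ Em, Pi v = v) ∧
      IsCompl (LinearMap.ker (Pi : E →ₗ[ℝ] E)) Em ∧
      (∀ v : E, P v v = P (v - Pi v) (v - Pi v) + P (Pi v) (Pi v)) ∧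
      (∀ v : E, Pi v = 0 → v ≠ 0 → 0 < P v v) :=
  stmt_0_general P hsymm Ep Em hcompl hfd hpos hneg
end

section
/- Let E be a real Banach space, P : E → E* a bounded symmetric operator with quadratic form V(v) = ⟨v, Pv⟩ positive on E⁺ and negative on a finite-dimensional E⁻, where E = E⁺ ⊕ E⁻, and let Π : E → E⁻ be the V-orthogonal projector. Define C := inf{ (−V(ζ))^{1/2} : ζ ∈ E⁻, ‖ζ‖ = 1 }. Then C > 0 and ‖Π‖ ≤ C^{−2} ‖P‖, where ‖P‖ is the operator norm of P in L(E; E*). -/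
/-!
On the finite-dimensional space `E⁻` the form `-V` is negative definite, so `√(-V)` attains a
positive minimum `C` on the compact unit sphere; by homogeneity `C² ‖ζ‖² ≤ -V ζ` on all of `E⁻`.
For `ζ = Π v`, orthogonality gives `-V (Π v) = -⟨v, P (Π v)⟩ ≤ ‖P‖ ‖v‖ ‖Π v‖`, and dividing by
`C² ‖Π v‖` bounds `‖Π v‖`.
-/

section

variable {E : Type*} [NormedAddCommGroup E] [NormedSpace ℝ E]

noncomputable def negCoercivityConst (B : E →L[ℝ] E →L[ℝ] ℝ) (W : Submodule ℝ E) : ℝ :=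
  sInf {r : ℝ | ∃ ζ : E, ζ ∈ W ∧ ‖ζ‖ = 1 ∧ r = Real.sqrt (-(B ζ ζ))}

namespace negCoercivityConst

variable (B : E →L[ℝ] E →L[ℝ] ℝ) (W : Submodule ℝ E)

lemma nonneg : 0 ≤ negCoercivityConst B W :=
  Real.sInf_nonneg fun _ ⟨_, _, _, hr⟩ => hr ▸ Real.sqrt_nonneg _

lemma le_sqrt {ζ : E} (hζW : ζ ∈ W) (hζ : ‖ζ‖ = 1) :
    negCoercivityConst B W ≤ Real.sqrt (-(B ζ ζ)) :=
  csInf_le ⟨0, fun _ ⟨_, _, _, hr⟩ => hr ▸ Real.sqrt_nonneg _⟩ ⟨ζ, hζW, hζ, rfl⟩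

lemma pos [FiniteDimensional ℝ W] (hW : W ≠ ⊥) (hneg : ∀ v ∈ W, v ≠ 0 → B v v < 0) :
    0 < negCoercivityConst B W := by
  have : Nontrivial W := Submodule.nontrivial_iff_ne_bot.mpr hW
  obtain ⟨ζ₀, hζ₀, hmin⟩ := (isCompact_sphere (0 : W) 1).exists_isMinOn
    (NormedSpace.sphere_nonempty.mpr zero_le_one)
    (Continuous.continuousOn (f := fun ζ : W => Real.sqrt (-(B ζ ζ))) (by fun_prop))
  have hζ₀norm : ‖(ζ₀ : E)‖ = 1 := by simpa using hζ₀
  have hζ₀neg : B ζ₀ ζ₀ < 0 := hneg _ ζ₀.2 (norm_ne_zero_iff.mp (by simp [hζ₀norm]))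
  refine lt_of_lt_of_le (Real.sqrt_pos.mpr (neg_pos.mpr hζ₀neg)) (le_csInf ?_ ?_)
  · exact ⟨_, ζ₀, ζ₀.2, hζ₀norm, rfl⟩
  · rintro r ⟨ζ, hζW, hζ, rfl⟩
    exact hmin (show (⟨ζ, hζW⟩ : W) ∈ Metric.sphere 0 1 by simpa using hζ)

lemma sq_mul_norm_sq_le (hneg : ∀ v ∈ W, B v v ≤ 0) {ζ : E} (hζ : ζ ∈ W) :
    negCoercivityConst B W ^ 2 * ‖ζ‖ ^ 2 ≤ -(B ζ ζ) := by
  rcases eq_or_ne ζ 0 with rfl | hζ0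
  · simp
  have hn : 0 < ‖ζ‖ := norm_pos_iff.mpr hζ0
  set u := ‖ζ‖⁻¹ • ζ
  have huW : u ∈ W := W.smul_mem _ hζ
  have hBu : B u u = ‖ζ‖⁻¹ ^ 2 * B ζ ζ := by
    simp only [u, map_smul, FunLike.coe_smul, Pi.smul_apply, smul_eq_mul]
    ring
  have hC : negCoercivityConst B W ^ 2 ≤ -(B u u) := by
    rw [← Real.sq_sqrt (neg_nonneg.mpr (hneg u huW))]
    exact pow_le_pow_left₀ (nonneg B W) (le_sqrt B W huW (norm_smul_inv_norm hζ0)) 2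
  rw [hBu] at hC
  calc negCoercivityConst B W ^ 2 * ‖ζ‖ ^ 2 ≤ -(‖ζ‖⁻¹ ^ 2 * B ζ ζ) * ‖ζ‖ ^ 2 := by gcongr
    _ = -(B ζ ζ) := by field_simp

end negCoercivityConst

lemma ContinuousLinearMap.opNorm_le_of_orthogonal_of_coercive (B : E →L[ℝ] E →L[ℝ] ℝ)
    (W : Submodule ℝ E) (T : E →L[ℝ] E) (hTMem : ∀ v, T v ∈ W)
    (hTOrth : ∀ w ∈ W, ∀ v, B v w = B (T v) w) {c : ℝ} (hc : 0 < c)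
    (hcoer : ∀ ζ ∈ W, c ^ 2 * ‖ζ‖ ^ 2 ≤ -(B ζ ζ)) : ‖T‖ ≤ c⁻¹ ^ 2 * ‖B‖ := by
  refine T.opNorm_le_bound (by positivity) fun v => ?_
  have hbound : c ^ 2 * ‖T v‖ ^ 2 ≤ ‖B‖ * ‖v‖ * ‖T v‖ :=
    calc c ^ 2 * ‖T v‖ ^ 2 ≤ -(B (T v) (T v)) := hcoer _ (hTMem v)
      _ = -(B v (T v)) := by rw [hTOrth _ (hTMem v) v]
      _ ≤ ‖B v (T v)‖ := neg_le_abs _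
      _ ≤ ‖B‖ * ‖v‖ * ‖T v‖ := B.le_opNorm₂ v (T v)
  rcases (norm_nonneg (T v)).eq_or_lt with h0 | h0
  · rw [← h0]; positivity
  rw [show c⁻¹ ^ 2 * ‖B‖ * ‖v‖ = (c ^ 2)⁻¹ * (‖B‖ * ‖v‖) by field_simp,
    le_inv_mul_iff₀ (by positivity)]
  nlinarith

end

theorem stmt_1_general {E : Type*} [NormedAddCommGroup E] [NormedSpace ℝ E]
    (P : E →L[ℝ] E →L[ℝ] ℝ)
    (Em : Submodule ℝ E)
    (hfd : FiniteDimensional ℝ Em) (hEm : Em ≠ ⊥)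
    (hneg : ∀ v ∈ Em, v ≠ 0 → P v v < 0)
    (Pi : E →L[ℝ] E)
    (hPiMem : ∀ v : E, Pi v ∈ Em)
    (hPiOrth : ∀ w ∈ Em, ∀ v : E, P v w = P (Pi v) w)
    (C : ℝ)
    (hC : C = sInf { r : ℝ | ∃ ζ : E, ζ ∈ Em ∧ ‖ζ‖ = 1 ∧ r = Real.sqrt (-(P ζ ζ)) }) :
    0 < C ∧ ‖Pi‖ ≤ C⁻¹ ^ 2 * ‖P‖ := by
  have hC' : C = negCoercivityConst P Em := hC
  subst hC'
  have hnonpos : ∀ v ∈ Em, P v v ≤ 0 := fun v hv => by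
    rcases eq_or_ne v 0 with rfl | hv0
    · simp
    · exact (hneg v hv hv0).le
  have hCpos := negCoercivityConst.pos P Em hEm hneg
  exact ⟨hCpos, ContinuousLinearMap.opNorm_le_of_orthogonal_of_coercive P Em Pi hPiMem hPiOrth
    hCpos fun ζ hζ => negCoercivityConst.sq_mul_norm_sq_le P Em hnonpos hζ⟩

/-- Norm bound for the V-orthogonal projector:
`C := inf {√(−V ζ) : ζ ∈ E⁻, ‖ζ‖ = 1}` is positive and `‖Π‖ ≤ C⁻² ‖P‖`. -/
theorem stmt_1 {E : Type*} [NormedAddCommGroup E] [NormedSpace ℝ E] [CompleteSpace E]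
    (P : E →L[ℝ] E →L[ℝ] ℝ)
    (hsymm : ∀ v₁ v₂ : E, P v₂ v₁ = P v₁ v₂)
    (Ep Em : Submodule ℝ E) (hcompl : IsCompl Ep Em)
    (hfd : FiniteDimensional ℝ Em) (hEm : Em ≠ ⊥)
    (hpos : ∀ v ∈ Ep, v ≠ 0 → 0 < P v v)
    (hneg : ∀ v ∈ Em, v ≠ 0 → P v v < 0)
    (Pi : E →L[ℝ] E)
    (hPiMem : ∀ v : E, Pi v ∈ Em)
    (hPiId : ∀ v ∈ Em, Pi v = v)
    (hPiOrth : ∀ w ∈ Em, ∀ v : E, P v w = P (Pi v) w)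
    (C : ℝ)
    (hC : C = sInf { r : ℝ | ∃ ζ : E, ζ ∈ Em ∧ ‖ζ‖ = 1 ∧ r = Real.sqrt (-(P ζ ζ)) }) :
    0 < C ∧ ‖Pi‖ ≤ C⁻¹ ^ 2 * ‖P‖ :=
  stmt_1_general P Em hfd hEm hneg Pi hPiMem hPiOrth C hC
end

section
/- (Romanov's lemma) Let E be a real Banach space, P : E → E* a bounded symmetric operator with quadratic form V positive on E⁺ and negative on finite-dimensional E⁻, E = E⁺ ⊕ E⁻ V-orthogonally (so V(v) = V(v⁺) + V(v⁻) for v = v⁺ + v⁻ with v⁺ ∈ E⁺, v⁻ ∈ E⁻), and Π the V-orthogonal projector onto E⁻. Fix κ ∈ (0,1) and define V^{(κ)}(v) := V(v⁺) + κ² V(v⁻). Suppose w₁, w₂, w₃ ∈ E satisfy V(w₁ − w₃) ≥ 0, V^{(κ)}(w₂ − w₃) ≤ 0, and Π w₁ = Π w₂. Then V(w₁⁺ − w₃⁺) ≤ (1 − κ)^{−2} · V(w₁⁺ − w₂⁺), where wᵢ = wᵢ⁺ + wᵢ⁻ is the V-orthogonal decomposition. -/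
/-! The form `V` is a semi-norm squared on `E⁺`. Write `a = w₁⁺ − w₃⁺`, `c = w₁⁺ − w₂⁺`; since
`Π w₁ = Π w₂`, `w₂ − w₃` has positive part `a − c` and the same `E⁻`-part `b` as `w₁ − w₃`. The two
hypotheses read `V(a) + V(b) ≥ 0` and `V(a − c) + κ² V(b) ≤ 0`, so `V(a − c) ≤ κ² V(a)`, and the
triangle inequality `√V(a) ≤ √V(a − c) + √V(c) ≤ κ √V(a) + √V(c)` gives `(1 − κ) √V(a) ≤ √V(c)`. -/

namespace LinearMap.BilinForm

variable {M : Type*} [AddCommGroup M] [Module ℝ M]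

theorem sqrt_apply_self_add_le (B : LinearMap.BilinForm ℝ M) (hB : B.IsSymm) {S : Submodule ℝ M}
    (hS : ∀ v ∈ S, 0 ≤ B v v) {u v : M} (hu : u ∈ S) (hv : v ∈ S) :
    √(B (u + v) (u + v)) ≤ √(B u u) + √(B v v) := by
  have hcs : B u v ^ 2 ≤ B u u * B v v :=
    (B.restrict S).apply_sq_le_of_symm (fun x ↦ hS x x.2) (isSymm_iff.mp (hB.restrict S))
      ⟨u, hu⟩ ⟨v, hv⟩
  have huv : B u v ≤ √(B u u) * √(B v v) := by
    rw [← Real.sqrt_mul (hS u hu)]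
    exact Real.le_sqrt_of_sq_le hcs
  have hexpand : B (u + v) (u + v) = B u u + 2 * B u v + B v v := by
    simp only [map_add, LinearMap.add_apply, hB.eq v u]
    ring
  rw [Real.sqrt_le_iff]
  refine ⟨by positivity, ?_⟩
  rw [hexpand, add_sq, Real.sq_sqrt (hS u hu), Real.sq_sqrt (hS v hv)]
  linarith

end LinearMap.BilinForm

theorem stmt_3_general {E : Type*} [NormedAddCommGroup E] [NormedSpace ℝ E]
    (P : E →L[ℝ] E →L[ℝ] ℝ)
    (hsymm : ∀ v₁ v₂ : E, P v₂ v₁ = P v₁ v₂)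
    (Ep : Submodule ℝ E)
    (hpos : ∀ v ∈ Ep, v ≠ 0 → 0 < P v v)
    (Pi : E →L[ℝ] E)
    (hmemp : ∀ v : E, v - Pi v ∈ Ep)
    (horth : ∀ v : E, P v v = P (v - Pi v) (v - Pi v) + P (Pi v) (Pi v))
    (κ : ℝ) (hκ : κ ∈ Set.Ioo (0:ℝ) 1)
    (w₁ w₂ w₃ : E)
    (h13 : 0 ≤ P (w₁ - w₃) (w₁ - w₃))
    (h23 : P ((w₂ - w₃) - Pi (w₂ - w₃)) ((w₂ - w₃) - Pi (w₂ - w₃))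
            + κ ^ 2 * P (Pi (w₂ - w₃)) (Pi (w₂ - w₃)) ≤ 0)
    (hpi : Pi w₁ = Pi w₂) :
    P ((w₁ - Pi w₁) - (w₃ - Pi w₃)) ((w₁ - Pi w₁) - (w₃ - Pi w₃)) ≤
      (1 - κ)⁻¹ ^ 2 *
        P ((w₁ - Pi w₁) - (w₂ - Pi w₂)) ((w₁ - Pi w₁) - (w₂ - Pi w₂)) := by
  obtain ⟨hκ0, hκ1⟩ := hκ
  set a := (w₁ - Pi w₁) - (w₃ - Pi w₃)
  set c := (w₁ - Pi w₁) - (w₂ - Pi w₂)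
  have hV : ∀ v ∈ Ep, 0 ≤ P v v := fun v hv ↦
    (eq_or_ne v 0).elim (fun h ↦ by simp [h]) fun h ↦ (hpos v hv h).le
  have ha : (w₁ - w₃) - Pi (w₁ - w₃) = a := by simp only [a, map_sub]; abel
  have hc : (w₁ - w₂) - Pi (w₁ - w₂) = c := by simp only [c, map_sub, hpi]; abel
  have hd : (w₂ - w₃) - Pi (w₂ - w₃) = a - c := by simp only [a, c, map_sub, hpi]; abel
  have hb : Pi (w₂ - w₃) = Pi (w₁ - w₃) := by simp only [map_sub, hpi]
  have haE : a ∈ Ep := ha ▸ hmemp _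
  have hcE : c ∈ Ep := hc ▸ hmemp _
  have hVd : P (a - c) (a - c) ≤ κ ^ 2 * P a a := by
    rw [horth, ha] at h13
    rw [hd, hb] at h23
    nlinarith
  have hsqrt_d : √(P (a - c) (a - c)) ≤ κ * √(P a a) := by
    calc √(P (a - c) (a - c)) ≤ √(κ ^ 2 * P a a) := Real.sqrt_le_sqrt hVd
      _ = κ * √(P a a) := by rw [Real.sqrt_mul' _ (hV a haE), Real.sqrt_sq hκ0.le]
  have htri : √(P a a) ≤ √(P (a - c) (a - c)) + √(P c c) := by
    simpa using P.toBilinForm.sqrt_apply_self_add_le ⟨fun x y ↦ hsymm y x⟩ hV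
      (Ep.sub_mem haE hcE) hcE
  have hsq : ((1 - κ) * √(P a a)) ^ 2 ≤ √(P c c) ^ 2 :=
    pow_le_pow_left₀ (mul_nonneg (by linarith) (Real.sqrt_nonneg _)) (by linarith) 2
  rw [mul_pow, Real.sq_sqrt (hV a haE), Real.sq_sqrt (hV c hcE)] at hsq
  rw [inv_pow, le_inv_mul_iff₀ (by positivity)]
  exact hsq

/-- Romanov's lemma: if `V(w₁ − w₃) ≥ 0`, `V^{(κ)}(w₂ − w₃) ≤ 0` and
`Π w₁ = Π w₂`, then `V(w₁⁺ − w₃⁺) ≤ (1 − κ)⁻² V(w₁⁺ − w₂⁺)`, where `x⁺ = x − Π x`. -/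
theorem stmt_3 {E : Type*} [NormedAddCommGroup E] [NormedSpace ℝ E]
    (P : E →L[ℝ] E →L[ℝ] ℝ)
    (hsymm : ∀ v₁ v₂ : E, P v₂ v₁ = P v₁ v₂)
    (Ep Em : Submodule ℝ E) (hcompl : IsCompl Ep Em)
    (hfd : FiniteDimensional ℝ Em)
    (hpos : ∀ v ∈ Ep, v ≠ 0 → 0 < P v v)
    (hneg : ∀ v ∈ Em, v ≠ 0 → P v v < 0)
    (Pi : E →L[ℝ] E)
    (hmem : ∀ v : E, Pi v ∈ Em)
    (hmemp : ∀ v : E, v - Pi v ∈ Ep)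
    (hid : ∀ v ∈ Em, Pi v = v)
    (horth : ∀ v : E, P v v = P (v - Pi v) (v - Pi v) + P (Pi v) (Pi v))
    (κ : ℝ) (hκ : κ ∈ Set.Ioo (0:ℝ) 1)
    (w₁ w₂ w₃ : E)
    (h13 : 0 ≤ P (w₁ - w₃) (w₁ - w₃))
    (h23 : P ((w₂ - w₃) - Pi (w₂ - w₃)) ((w₂ - w₃) - Pi (w₂ - w₃))
            + κ ^ 2 * P (Pi (w₂ - w₃)) (Pi (w₂ - w₃)) ≤ 0)
    (hpi : Pi w₁ = Pi w₂) :
    P ((w₁ - Pi w₁) - (w₃ - Pi w₃)) ((w₁ - Pi w₁) - (w₃ - Pi w₃)) ≤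
      (1 - κ)⁻¹ ^ 2 *
        P ((w₁ - Pi w₁) - (w₂ - Pi w₂)) ((w₁ - Pi w₁) - (w₂ - Pi w₂)) :=
  stmt_3_general P hsymm Ep hpos Pi hmemp horth κ hκ w₁ w₂ w₃ h13 h23 hpi
end

section
/- Let (λ_k)_{k≥1} be a nondecreasing sequence of positive reals tending to infinity, let 0 ≤ β ≤ α with α − β ≤ 1, fix j with λ_j < λ_{j+1}, and let ν ∈ (λ_j, λ_{j+1}). Then sup_k λ_k^{α−β} / |λ_k − ν| = max( λ_j^{α−β}/(ν − λ_j), λ_{j+1}^{α−β}/(λ_{j+1} − ν) ), and this supremum over k is minimized in ν at ν₀ = (λ_{j+1}^{α−β} λ_j + λ_j^{α−β} λ_{j+1}) / (λ_j^{α−β} + λ_{j+1}^{α−β}), where its value equals (λ_j^{α−β} + λ_{j+1}^{α−β})/(λ_{j+1} − λ_j). -/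
/-!
Below the gap, `t ↦ t ^ γ / (ν - t)` increases (numerator up, denominator down); above it,
`t ↦ t ^ γ / (t - ν)` decreases because for `γ ≤ 1` the numerator grows at most linearly,
i.e. `t ^ γ ≤ s ^ γ * (t / s)`. So along a monotone sequence the supremum is attained at one of
the two eigenvalues adjacent to `ν`. The maximum of the two resulting terms, one increasing and
one decreasing in `ν`, is smallest where they balance, which is the weighted point `ν₀`.
-/

open Set

namespace SpectralGap

theorem rpow_div_sub_le_of_le_of_lt {γ ν s t : ℝ} (hγ : 0 ≤ γ) (hs : 0 ≤ s) (hst : s ≤ t)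
    (htν : t < ν) : s ^ γ / (ν - s) ≤ t ^ γ / (ν - t) :=
  div_le_div₀ (Real.rpow_nonneg (hs.trans hst) _) (Real.rpow_le_rpow hs hst hγ) (by linarith) (by linarith)

theorem rpow_le_mul_div_of_le {γ s t : ℝ} (hγ : γ ≤ 1) (hs : 0 < s) (hst : s ≤ t) :
    t ^ γ ≤ s ^ γ * (t / s) := by
  have hts : 1 ≤ t / s := (one_le_div hs).mpr hst
  calc t ^ γ = s ^ γ * (t / s) ^ γ := by
        rw [← Real.mul_rpow hs.le (by positivity), mul_div_cancel₀ t hs.ne']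
    _ ≤ s ^ γ * (t / s) ^ (1 : ℝ) := by gcongr
    _ = s ^ γ * (t / s) := by rw [Real.rpow_one]

theorem rpow_div_sub_le_of_lt_of_le {γ ν s t : ℝ} (hγ : γ ≤ 1) (hν : 0 ≤ ν) (hνs : ν < s)
    (hst : s ≤ t) : t ^ γ / (t - ν) ≤ s ^ γ / (s - ν) := by
  have hs : 0 < s := hν.trans_lt hνs
  rw [div_le_div_iff₀ (by linarith) (by linarith)]
  have hν_le : ν ≤ t / s * ν := le_mul_of_one_le_left hν ((one_le_div hs).mpr hst)
  calc t ^ γ * (s - ν) ≤ s ^ γ * (t / s) * (s - ν) := by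
        gcongr
        exact rpow_le_mul_div_of_le hγ hs hst
    _ = s ^ γ * (t - t / s * ν) := by field_simp
    _ ≤ s ^ γ * (t - ν) := by gcongr

theorem iSup_rpow_div_abs_sub_eq_max {l : ℕ → ℝ} (hl : Monotone l) (hl0 : ∀ k, 0 ≤ l k)
    {γ : ℝ} (hγ0 : 0 ≤ γ) (hγ1 : γ ≤ 1) {j : ℕ} {ν : ℝ} (hν : ν ∈ Ioo (l j) (l (j + 1))) :
    ⨆ k, l k ^ γ / |l k - ν| =
      max (l j ^ γ / (ν - l j)) (l (j + 1) ^ γ / (l (j + 1) - ν)) := by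
  obtain ⟨hjν, hνj⟩ := hν
  have below {k : ℕ} (hk : k ≤ j) : l k ^ γ / |l k - ν| = l k ^ γ / (ν - l k) := by
    rw [abs_sub_comm, abs_of_pos (by linarith [hl hk])]
  have above {k : ℕ} (hk : j + 1 ≤ k) : l k ^ γ / |l k - ν| = l k ^ γ / (l k - ν) := by
    rw [abs_of_pos (by linarith [hl hk])]
  have bound (k : ℕ) :
      l k ^ γ / |l k - ν| ≤ max (l j ^ γ / (ν - l j)) (l (j + 1) ^ γ / (l (j + 1) - ν)) := by
    rcases le_or_gt k j with hk | hk
    · rw [below hk]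
      exact le_max_of_le_left (rpow_div_sub_le_of_le_of_lt hγ0 (hl0 k) (hl hk) hjν)
    · rw [above hk]
      exact le_max_of_le_right
        (rpow_div_sub_le_of_lt_of_le hγ1 ((hl0 j).trans hjν.le) hνj (hl hk))
  have hbdd : BddAbove (range fun k => l k ^ γ / |l k - ν|) := ⟨_, forall_mem_range.mpr bound⟩
  refine le_antisymm (ciSup_le bound) (max_le ?_ ?_)
  · simpa only [below le_rfl] using le_ciSup hbdd j
  · simpa only [above le_rfl] using le_ciSup hbdd (j + 1)

variable {A B x y : ℝ}

theorem weighted_point_mem_Ioo (hA : 0 < A) (hB : 0 < B) (hxy : x < y) :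
    (B * x + A * y) / (A + B) ∈ Ioo x y := by
  constructor
  · rw [lt_div_iff₀ (by linarith)]; nlinarith
  · rw [div_lt_iff₀ (by linarith)]; nlinarith

theorem div_add_div_sub_le_max {ν : ℝ} (hν : ν ∈ Ioo x y) :
    (A + B) / (y - x) ≤ max (A / (ν - x)) (B / (y - ν)) := by
  obtain ⟨hxν, hνy⟩ := hν
  by_contra! h
  obtain ⟨hleft, hright⟩ := max_lt_iff.mp h
  rw [div_lt_iff₀ (by linarith)] at hleft hright
  have hsum : (A + B) / (y - x) * (y - x) = A + B := div_mul_cancel₀ _ (by linarith)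
  nlinarith

theorem max_div_sub_weighted_point_eq (hA : 0 < A) (hB : 0 < B) (hxy : x < y) :
    max (A / ((B * x + A * y) / (A + B) - x)) (B / (y - (B * x + A * y) / (A + B))) =
      (A + B) / (y - x) := by
  have hAB : A + B ≠ 0 := by linarith
  have hyx : y - x ≠ 0 := by linarith
  have hleft : A / ((B * x + A * y) / (A + B) - x) = (A + B) / (y - x) := by
    rw [show (B * x + A * y) / (A + B) - x = A * (y - x) / (A + B) by field_simp; ring]
    field_simp
  have hright : B / (y - (B * x + A * y) / (A + B)) = (A + B) / (y - x) := by
    rw [show y - (B * x + A * y) / (A + B) = B * (y - x) / (A + B) by field_simp; ring]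
    field_simp
  rw [hleft, hright, max_self]

end SpectralGap

open SpectralGap in
theorem stmt_5_general (l : ℕ → ℝ) (hl : Monotone l) (hlpos : ∀ k, 0 < l k)
    (α β : ℝ) (hβα : β ≤ α) (hαβ : α - β ≤ 1)
    (j : ℕ)
    (ν : ℝ) (hν : ν ∈ Set.Ioo (l j) (l (j + 1))) :
    (⨆ k, l k ^ (α - β) / |l k - ν|) =
      max (l j ^ (α - β) / (ν - l j)) (l (j + 1) ^ (α - β) / (l (j + 1) - ν)) ∧
    (l (j + 1) ^ (α - β) * l j + l j ^ (α - β) * l (j + 1)) /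
        (l j ^ (α - β) + l (j + 1) ^ (α - β)) ∈ Set.Ioo (l j) (l (j + 1)) ∧
    (∀ ν' ∈ Set.Ioo (l j) (l (j + 1)),
      (l j ^ (α - β) + l (j + 1) ^ (α - β)) / (l (j + 1) - l j) ≤
        max (l j ^ (α - β) / (ν' - l j)) (l (j + 1) ^ (α - β) / (l (j + 1) - ν'))) ∧
    max
        (l j ^ (α - β) /
          ((l (j + 1) ^ (α - β) * l j + l j ^ (α - β) * l (j + 1)) /
              (l j ^ (α - β) + l (j + 1) ^ (α - β)) - l j))
        (l (j + 1) ^ (α - β) /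
          (l (j + 1) -
            (l (j + 1) ^ (α - β) * l j + l j ^ (α - β) * l (j + 1)) /
              (l j ^ (α - β) + l (j + 1) ^ (α - β)))) =
      (l j ^ (α - β) + l (j + 1) ^ (α - β)) / (l (j + 1) - l j) := by
  have hgap : l j < l (j + 1) := hν.1.trans hν.2
  have hA : 0 < l j ^ (α - β) := Real.rpow_pos_of_pos (hlpos j) _
  have hB : 0 < l (j + 1) ^ (α - β) := Real.rpow_pos_of_pos (hlpos (j + 1)) _
  exact ⟨iSup_rpow_div_abs_sub_eq_max hl (fun k => (hlpos k).le) (sub_nonneg.mpr hβα) hαβ hν,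
    weighted_point_mem_Ioo hA hB hgap, fun _ hν' => div_add_div_sub_le_max hν',
    max_div_sub_weighted_point_eq hA hB hgap⟩

/-- the optimal spectral-gap computation:
`sup_k λ_k^{α−β}/|λ_k − ν| = max(λ_j^{α−β}/(ν−λ_j), λ_{j+1}^{α−β}/(λ_{j+1}−ν))` for
`ν ∈ (λ_j, λ_{j+1})`, and this max is minimized at
`ν₀ = (λ_{j+1}^{α−β} λ_j + λ_j^{α−β} λ_{j+1})/(λ_j^{α−β} + λ_{j+1}^{α−β})`, where it equals
`(λ_j^{α−β} + λ_{j+1}^{α−β})/(λ_{j+1} − λ_j)`. -/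
theorem stmt_5 (l : ℕ → ℝ) (hl : Monotone l) (hlpos : ∀ k, 0 < l k)
    (hltop : Filter.Tendsto l Filter.atTop Filter.atTop)
    (α β : ℝ) (hβ : 0 ≤ β) (hβα : β ≤ α) (hαβ : α - β ≤ 1)
    (j : ℕ) (hgap : l j < l (j + 1))
    (ν : ℝ) (hν : ν ∈ Set.Ioo (l j) (l (j + 1))) :
    (⨆ k, l k ^ (α - β) / |l k - ν|) =
      max (l j ^ (α - β) / (ν - l j)) (l (j + 1) ^ (α - β) / (l (j + 1) - ν)) ∧
    (l (j + 1) ^ (α - β) * l j + l j ^ (α - β) * l (j + 1)) /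
        (l j ^ (α - β) + l (j + 1) ^ (α - β)) ∈ Set.Ioo (l j) (l (j + 1)) ∧
    (∀ ν' ∈ Set.Ioo (l j) (l (j + 1)),
      (l j ^ (α - β) + l (j + 1) ^ (α - β)) / (l (j + 1) - l j) ≤
        max (l j ^ (α - β) / (ν' - l j)) (l (j + 1) ^ (α - β) / (l (j + 1) - ν'))) ∧
    max
        (l j ^ (α - β) /
          ((l (j + 1) ^ (α - β) * l j + l j ^ (α - β) * l (j + 1)) /
              (l j ^ (α - β) + l (j + 1) ^ (α - β)) - l j))
        (l (j + 1) ^ (α - β) /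
          (l (j + 1) -
            (l (j + 1) ^ (α - β) * l j + l j ^ (α - β) * l (j + 1)) /
              (l j ^ (α - β) + l (j + 1) ^ (α - β)))) =
      (l j ^ (α - β) + l (j + 1) ^ (α - β)) / (l (j + 1) - l j) :=
  stmt_5_general l hl hlpos α β hβα hαβ j ν hν
end

section
/- (Squeezing estimate in integral form) Under the squeezing hypothesis of the previous statement with ν(t,q) = ∫₀^t ν₀(θ^s q)ds and τ = τ_V ≥ 0: if v₁, v₂ ∈ E and T ≥ τ_V satisfy V_q(ψ^T(q,v₁) − ψ^T(q,v₂)) ≥ 0, then for every t ∈ [τ_V, T], δ^{−1} V_q(v₁ − v₂) ≥ ∫₀^t e^{2ν(s,q)} ‖ψ^s(q,v₁) − ψ^s(q,v₂)‖_H² ds; in particular V_q(v₁ − v₂) ≥ 0. -/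
/-!
Applying the squeezing inequality on `[0, T]` and discarding the nonnegative endpoint term
`e^{2ν(T,q)} V_{θ^T q}(Δψ(T))` bounds `δ ∫₀^T e^{2ν} ‖Δψ‖²` by `V_q(v₁ − v₂)`. The integrand is
nonnegative, so the integral over `[0, t]` is at most the one over `[0, T]`, and both are `≥ 0`.
That monotonicity needs the integrand to be integrable (otherwise the integral is junk `0`);
it is continuous because `ν(·, q)` is the primitive of the bounded measurable `ν₀ ∘ θ^· q`.
-/

open MeasureTheory Set

lemma Measurable.intervalIntegrable_of_mem_Icc {f : ℝ → ℝ} {m M : ℝ} (hf : Measurable f)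
    (hfb : ∀ x, f x ∈ Icc m M) (a b : ℝ) : IntervalIntegrable f volume a b :=
  intervalIntegrable_iff.2 <| IntegrableOn.of_bound measure_Ioc_lt_top
    hf.aestronglyMeasurable (|m| ⊔ |M|)
    (ae_of_all _ fun x => abs_le_max_abs_abs (hfb x).1 (hfb x).2)

lemma Measurable.continuous_primitive_of_mem_Icc {f : ℝ → ℝ} {m M : ℝ} (hf : Measurable f)
    (hfb : ∀ x, f x ∈ Icc m M) (a : ℝ) : Continuous fun b => ∫ x in a..b, f x :=
  intervalIntegral.continuous_primitive (hf.intervalIntegrable_of_mem_Icc hfb) a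

lemma integral_le_of_mul_integral_le_sub {g : ℝ → ℝ} {δ τ T V₀ W : ℝ}
    (hg : IntervalIntegrable g volume 0 T) (hg0 : ∀ s, 0 ≤ g s)
    (hδ : 0 < δ) (hτ : 0 ≤ τ) (hT : τ ≤ T) (hW : 0 ≤ W)
    (hsq : δ * ∫ s in (0:ℝ)..T, g s ≤ V₀ - W) :
    0 ≤ V₀ ∧ ∀ t ∈ Icc τ T, (∫ s in (0:ℝ)..t, g s) ≤ δ⁻¹ * V₀ := by
  have hmono : ∀ t ∈ Icc 0 T, (∫ s in (0:ℝ)..t, g s) ≤ ∫ s in (0:ℝ)..T, g s := fun t ht =>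
    intervalIntegral.integral_mono_interval le_rfl ht.1 ht.2 (ae_of_all _ hg0) hg
  have hδT : δ * ∫ s in (0:ℝ)..T, g s ≤ V₀ := by linarith
  have hT0 : 0 ≤ ∫ s in (0:ℝ)..T, g s :=
    intervalIntegral.integral_nonneg (hτ.trans hT) fun s _ => hg0 s
  refine ⟨(mul_nonneg hδ.le hT0).trans hδT, fun t ht => ?_⟩
  rw [le_inv_mul_iff₀ hδ]
  exact (mul_le_mul_of_nonneg_left (hmono t ⟨hτ.trans ht.1, ht.2⟩) hδ.le).trans hδT

theorem stmt_10_general {E H Q : Type*} [NormedAddCommGroup E] [NormedSpace ℝ E]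
    [NormedAddCommGroup H] [InnerProductSpace ℝ H]
    (j : E →L[ℝ] H)
    (θ : ℝ → Q → Q) (ψ : ℝ → Q → E → E)
    (hθ0 : ∀ q, θ 0 q = q)
    (hψ0 : ∀ q v, ψ 0 q v = v)
    (hψcont : ∀ q v, Continuous fun s => ψ s q v)
    (V : Q → E → ℝ)
    (ν₀ : Q → ℝ) (νm νp : ℝ) (hν₀b : ∀ q, νm ≤ ν₀ q ∧ ν₀ q ≤ νp)
    (hν₀meas : ∀ q, Measurable fun s : ℝ => ν₀ (θ s q))
    (ν : ℝ → Q → ℝ) (hν : ∀ t q, ν t q = ∫ s in (0:ℝ)..t, ν₀ (θ s q))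
    (δ τ : ℝ) (hδ : 0 < δ) (hτ : 0 ≤ τ)
    (hsq : ∀ q (v₁ v₂ : E) (l r : ℝ), 0 ≤ l → l + τ ≤ r →
      Real.exp (2 * ν r q) * V (θ r q) (ψ r q v₁ - ψ r q v₂) -
        Real.exp (2 * ν l q) * V (θ l q) (ψ l q v₁ - ψ l q v₂) ≤
      -δ * ∫ s in l..r, Real.exp (2 * ν s q) * ‖j (ψ s q v₁ - ψ s q v₂)‖ ^ 2)
    (q : Q) (v₁ v₂ : E) (T : ℝ) (hT : τ ≤ T)
    (hTpos : 0 ≤ V (θ T q) (ψ T q v₁ - ψ T q v₂)) :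
    0 ≤ V q (v₁ - v₂) ∧
    ∀ t ∈ Set.Icc τ T,
      (∫ s in (0:ℝ)..t, Real.exp (2 * ν s q) * ‖j (ψ s q v₁ - ψ s q v₂)‖ ^ 2) ≤
        δ⁻¹ * V q (v₁ - v₂) := by
  have hνcont : Continuous fun s => ν s q := by
    simp only [hν]
    exact (hν₀meas q).continuous_primitive_of_mem_Icc (fun s => hν₀b (θ s q)) 0
  have hν0 : ν 0 q = 0 := by rw [hν, intervalIntegral.integral_same]
  have hsq0T := hsq q v₁ v₂ 0 T le_rfl (by linarith)
  simp only [hν0, hθ0, hψ0, mul_zero, Real.exp_zero, one_mul] at hsq0T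
  refine integral_le_of_mul_integral_le_sub
    ((by fun_prop : Continuous _).intervalIntegrable 0 T) (fun s => by positivity) hδ hτ hT
    (mul_nonneg (Real.exp_pos (2 * ν T q)).le hTpos) ?_
  linarith

/-- Squeezing estimate in integral form: if the trajectories are
pseudo-ordered in the nonnegative direction at some time `T ≥ τ`, then the weighted
L² distance of the trajectories up to any `t ∈ [τ, T]` is controlled by
`δ⁻¹ V_q(v₁ − v₂)`; in particular `V_q(v₁ − v₂) ≥ 0`. -/
theorem stmt_10 {E H Q : Type*} [NormedAddCommGroup E] [NormedSpace ℝ E]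
    [NormedAddCommGroup H] [InnerProductSpace ℝ H]
    (j : E →L[ℝ] H)
    (θ : ℝ → Q → Q) (ψ : ℝ → Q → E → E)
    (hθ0 : ∀ q, θ 0 q = q)
    (hθadd : ∀ t s : ℝ, 0 ≤ t → 0 ≤ s → ∀ q, θ (t + s) q = θ t (θ s q))
    (hψ0 : ∀ q v, ψ 0 q v = v)
    (hψadd : ∀ t s : ℝ, 0 ≤ t → 0 ≤ s → ∀ q v, ψ (t + s) q v = ψ t (θ s q) (ψ s q v))
    (hψcont : ∀ q v, Continuous fun s => ψ s q v)
    (Qop : Q → E →L[ℝ] E →L[ℝ] ℝ)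
    (hQsym : ∀ q (v₁ v₂ : E), Qop q v₂ v₁ = Qop q v₁ v₂)
    (V : Q → E → ℝ) (hV : ∀ q v, V q v = Qop q v v)
    (ν₀ : Q → ℝ) (νm νp : ℝ) (hν₀b : ∀ q, νm ≤ ν₀ q ∧ ν₀ q ≤ νp)
    (hν₀meas : ∀ q, Measurable fun s : ℝ => ν₀ (θ s q))
    (ν : ℝ → Q → ℝ) (hν : ∀ t q, ν t q = ∫ s in (0:ℝ)..t, ν₀ (θ s q))
    (δ τ : ℝ) (hδ : 0 < δ) (hτ : 0 ≤ τ)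
    (hsq : ∀ q (v₁ v₂ : E) (l r : ℝ), 0 ≤ l → l + τ ≤ r →
      Real.exp (2 * ν r q) * V (θ r q) (ψ r q v₁ - ψ r q v₂) -
        Real.exp (2 * ν l q) * V (θ l q) (ψ l q v₁ - ψ l q v₂) ≤
      -δ * ∫ s in l..r, Real.exp (2 * ν s q) * ‖j (ψ s q v₁ - ψ s q v₂)‖ ^ 2)
    (q : Q) (v₁ v₂ : E) (T : ℝ) (hT : τ ≤ T)
    (hTpos : 0 ≤ V (θ T q) (ψ T q v₁ - ψ T q v₂)) :
    0 ≤ V q (v₁ - v₂) ∧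
    ∀ t ∈ Set.Icc τ T,
      (∫ s in (0:ℝ)..t, Real.exp (2 * ν s q) * ‖j (ψ s q v₁ - ψ s q v₂)‖ ^ 2) ≤
        δ⁻¹ * V q (v₁ - v₂) :=
  stmt_10_general j θ ψ hθ0 hψ0 hψcont V ν₀ νm νp hν₀b hν₀meas ν hν δ τ hδ hτ hsq q v₁ v₂ T hT hTpos
end

section
/- Let E be a real Banach space, and suppose for each point q in a topological space Q we have a bounded symmetric operator P(q) ∈ L(E;E*) with quadratic form V_q, a direct sum E = E⁺(q) ⊕ E⁻(q) with V_q positive on E⁺(q) and negative on the j-dimensional E⁻(q), and let Π_q be the V_q-orthogonal projector onto E⁻(q). Assume: (a) q ↦ P(q) is continuous in operator norm; (b) the (not necessarily orthogonal) projectors Π^d_q onto E⁻(q) along E⁺(q) depend continuously on q in L(E). Then q ↦ Π_q is continuous in the norm of L(E). -/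
/-!
Near `q₀`, the dichotomy projector `Π^d_q` restricts to an isomorphism `D_q` of the fixed space
`E⁻(q₀)` onto `E⁻(q)`, so `Π_q = D_q G_q⁻¹ D_q* P(q)` with the Gram operator
`G_q = D_q* P(q) D_q` on `E⁻(q₀)`. Since `V_{q₀}` is definite on `E⁻(q₀)`, `G_{q₀}` is
invertible, and every factor of the formula depends continuously on `q`, operator inversion
being continuous at invertible operators.
-/

open ContinuousLinearMap Module Topology

section GramProjection

variable {𝕜 E F : Type*} [NontriviallyNormedField 𝕜]
  [NormedAddCommGroup E] [NormedSpace 𝕜 E] [NormedAddCommGroup F] [NormedSpace 𝕜 F]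

theorem ContinuousAt.bilinearComp {X E' F' G : Type*} [TopologicalSpace X]
    [NormedAddCommGroup E'] [NormedSpace 𝕜 E'] [NormedAddCommGroup F'] [NormedSpace 𝕜 F']
    [NormedAddCommGroup G] [NormedSpace 𝕜 G]
    {B : X → E →L[𝕜] F →L[𝕜] G} {gE : X → E' →L[𝕜] E} {gF : X → F' →L[𝕜] F} {x₀ : X}
    (hB : ContinuousAt B x₀) (hgE : ContinuousAt gE x₀) (hgF : ContinuousAt gF x₀) :
    ContinuousAt (fun x => (B x).bilinearComp (gE x) (gF x)) x₀ :=
  (flipₗᵢ 𝕜 F' E' G).continuous.continuousAt.comp <|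
    ((flipₗᵢ 𝕜 E' F G).continuous.continuousAt.comp (hB.clm_comp hgE)).clm_comp hgF

/-- If `D` parametrises a subspace on which the Gram operator `D* B D` of `B` is invertible,
this is the `B`-orthogonal projector `D (D* B D)⁻¹ D* B` onto `range D`. -/
noncomputable def gramProjection (B : E →L[𝕜] E →L[𝕜] 𝕜) (D : F →L[𝕜] E) : E →L[𝕜] E :=
  D ∘L (B.bilinearComp D D).inverse ∘L B.bilinearComp (.id 𝕜 E) D

theorem eq_gramProjection {B : E →L[𝕜] E →L[𝕜] 𝕜} {D : F →L[𝕜] E} {π : E →L[𝕜] E}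
    (hG : (B.bilinearComp D D).IsInvertible)
    (hπ_mem : ∀ v, π v ∈ LinearMap.range (D : F →ₗ[𝕜] E))
    (hπ_orth : ∀ v u, B v (D u) = B (π v) (D u)) : π = gramProjection B D := by
  ext v
  obtain ⟨y, hy⟩ := hπ_mem v
  suffices y = (B.bilinearComp D D).inverse (B.bilinearComp (.id 𝕜 E) D v) by
    simp [gramProjection, ← this, ← hy]
  apply hG.injective
  rw [hG.self_apply_inverse]
  ext u
  simp only [bilinearComp_apply, id_apply, hπ_orth v u, ← hy]
  rfl

theorem ContinuousAt.gramProjection [CompleteSpace F] {X : Type*} [TopologicalSpace X]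
    {B : X → E →L[𝕜] E →L[𝕜] 𝕜} {D : X → F →L[𝕜] E} {x₀ : X}
    (hB : ContinuousAt B x₀) (hD : ContinuousAt D x₀)
    (hG : ((B x₀).bilinearComp (D x₀) (D x₀)).IsInvertible) :
    ContinuousAt (fun x => gramProjection (B x) (D x)) x₀ :=
  hD.clm_comp <| (ContinuousAt.comp (f := fun x => (B x).bilinearComp (D x) (D x))
    (hG.contDiffAt_map_inverse (n := 0)).continuousAt (hB.bilinearComp hD hD)).clm_comp
      (hB.bilinearComp continuousAt_const hD)

theorem injective_of_isInvertible_bilinearComp {B : E →L[𝕜] E →L[𝕜] 𝕜} {D : F →L[𝕜] E}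
    (hG : (B.bilinearComp D D).IsInvertible) : Function.Injective D :=
  Function.Injective.of_comp (f := fun x => (B x).comp D) hG.injective

end GramProjection

theorem LinearMap.range_eq_of_injective_of_finrank_eq {K V W : Type*} [DivisionRing K]
    [AddCommGroup V] [Module K V] [AddCommGroup W] [Module K W]
    {f : V →ₗ[K] W} {M : Submodule K W} [FiniteDimensional K M] (hf : Function.Injective f)
    (hmem : ∀ x, f x ∈ M) (hdim : finrank K V = finrank K M) : LinearMap.range f = M :=
  Submodule.eq_of_le_of_finrank_eq (LinearMap.range_le_iff_comap.2 (by ext; simp [hmem]))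
    ((LinearMap.finrank_range_of_inj hf).trans hdim)

theorem isInvertible_bilinearComp_subtypeL {𝕜 E : Type*} [NontriviallyNormedField 𝕜]
    [CompleteSpace 𝕜] [NormedAddCommGroup E] [NormedSpace 𝕜 E]
    {B : E →L[𝕜] E →L[𝕜] 𝕜} {M : Submodule 𝕜 E} [FiniteDimensional 𝕜 M]
    (hB : ∀ v ∈ M, B v v = 0 → v = 0) :
    (B.bilinearComp M.subtypeL M.subtypeL).IsInvertible := by
  set G := B.bilinearComp M.subtypeL M.subtypeL
  have hinj : Function.Injective G := by
    refine (injective_iff_map_eq_zero G).2 fun w hw => Subtype.ext ?_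
    exact hB w w.2 (by simpa [G] using congr($hw w))
  have hdim : finrank 𝕜 M = finrank 𝕜 (M →L[𝕜] 𝕜) :=
    (Subspace.dual_finrank_eq.symm.trans LinearMap.toContinuousLinearMap.finrank_eq)
  exact ⟨((G : M →ₗ[𝕜] M →L[𝕜] 𝕜).linearEquivOfInjective hinj hdim).toContinuousLinearEquiv,
    rfl⟩

theorem stmt_11_general {E Q : Type*} [NormedAddCommGroup E] [NormedSpace ℝ E]
    [TopologicalSpace Q]
    (P : Q → E →L[ℝ] E →L[ℝ] ℝ) (hPcont : Continuous P)
    (Em : Q → Submodule ℝ E)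
    (j : ℕ) (hfd : ∀ q, FiniteDimensional ℝ (Em q))
    (hdim : ∀ q, Module.finrank ℝ (Em q) = j)
    (hneg : ∀ q, ∀ v ∈ Em q, v ≠ 0 → P q v v < 0)
    (Pd : Q → E →L[ℝ] E)
    (hd_mem : ∀ q v, Pd q v ∈ Em q)
    (hd_id : ∀ q, ∀ v ∈ Em q, Pd q v = v)
    (hd_cont : Continuous Pd)
    (Po : Q → E →L[ℝ] E)
    (ho_mem : ∀ q v, Po q v ∈ Em q)
    (ho_orth : ∀ q, ∀ w ∈ Em q, ∀ v, P q v w = P q (Po q v) w) :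
    Continuous Po := by
  refine continuous_iff_continuousAt.2 fun q₀ => ?_
  have := hfd q₀
  set D : Q → Em q₀ →L[ℝ] E := fun q => Pd q ∘L (Em q₀).subtypeL
  have hD : Continuous D := hd_cont.clm_comp continuous_const
  have hD₀ : D q₀ = (Em q₀).subtypeL := by ext w; exact hd_id q₀ w w.2
  have hG₀ : ((P q₀).bilinearComp (D q₀) (D q₀)).IsInvertible := hD₀ ▸
    isInvertible_bilinearComp_subtypeL fun v hv hvv => by_contra fun h => (hneg q₀ v hv h).ne hvv
  have hG : ∀ᶠ q in 𝓝 q₀, ((P q).bilinearComp (D q) (D q)).IsInvertible :=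
    (hPcont.continuousAt.bilinearComp hD.continuousAt hD.continuousAt).eventually_mem
      (ContinuousLinearEquiv.isOpen.mem_nhds hG₀)
  refine (hPcont.continuousAt.gramProjection hD.continuousAt hG₀).congr ?_
  filter_upwards [hG] with q hGq
  have hrange : LinearMap.range (D q : Em q₀ →ₗ[ℝ] E) = Em q :=
    LinearMap.range_eq_of_injective_of_finrank_eq (injective_of_isInvertible_bilinearComp hGq)
      (fun _ => hd_mem q _) ((hdim q₀).trans (hdim q).symm)
  exact (eq_gramProjection hGq (fun v => hrange ▸ ho_mem q v)
    fun v u => ho_orth q _ (hd_mem q _) v).symm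

/-- continuity of the `V_q`-orthogonal projectors `Π_q` in the operator
norm, given norm-continuity of `q ↦ P(q)` and of the dichotomy projectors `q ↦ Π^d_q`. -/
theorem stmt_11 {E Q : Type*} [NormedAddCommGroup E] [NormedSpace ℝ E]
    [TopologicalSpace Q]
    (P : Q → E →L[ℝ] E →L[ℝ] ℝ) (hPcont : Continuous P)
    (hPsym : ∀ q (v₁ v₂ : E), P q v₂ v₁ = P q v₁ v₂)
    (Ep Em : Q → Submodule ℝ E)
    (hcompl : ∀ q, IsCompl (Ep q) (Em q))
    (j : ℕ) (hfd : ∀ q, FiniteDimensional ℝ (Em q))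
    (hdim : ∀ q, Module.finrank ℝ (Em q) = j)
    (hpos : ∀ q, ∀ v ∈ Ep q, v ≠ 0 → 0 < P q v v)
    (hneg : ∀ q, ∀ v ∈ Em q, v ≠ 0 → P q v v < 0)
    (Pd : Q → E →L[ℝ] E)
    (hd_mem : ∀ q v, Pd q v ∈ Em q)
    (hd_id : ∀ q, ∀ v ∈ Em q, Pd q v = v)
    (hd_ker : ∀ q, ∀ v ∈ Ep q, Pd q v = 0)
    (hd_cont : Continuous Pd)
    (Po : Q → E →L[ℝ] E)
    (ho_mem : ∀ q v, Po q v ∈ Em q)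
    (ho_id : ∀ q, ∀ v ∈ Em q, Po q v = v)
    (ho_orth : ∀ q, ∀ w ∈ Em q, ∀ v, P q v w = P q (Po q v) w) :
    Continuous Po :=
  stmt_11_general P hPcont Em j hfd hdim hneg Pd hd_mem hd_id hd_cont Po ho_mem ho_orth
end

section
/- (Cone perturbation, algebraic core) Let E be a real Banach space with symmetric P ∈ L(E;E*), V-orthogonal decomposition E = E⁺ ⊕ E⁻ with projector Π onto E⁻, ‖P‖ ≤ M_P, ‖Π‖ ≤ M_Π, and V(v) = V(Π⁺v) + V(Πv). For κ ∈ (0,1) set V^{(κ)}(v) := V(Π⁺v) + κ²V(Πv). Suppose real numbers a, b, I ≥ 0 satisfy: b − a ≤ −δ I (the unperturbed squeezing), where a = V(u), b = e^{2A}V(w) for vectors u, w ∈ E, constant A ∈ ℝ, and suppose V(Πu) ≤ 0 and I ≥ e^{−2M(τ+1)} e^{2A} L^{−2} ‖w‖² for constants M, τ, L > 0. If (1 − κ²) M_P M_Π² < (δ/2) e^{−2M(τ+1)} L^{−2}, then e^{2A}V^{(κ)}(w) − V^{(κ)}(u) ≤ −(δ/2) I. -/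
/-! `V^{(κ)} = V − (1 − κ²) V∘Π` by the orthogonality of the splitting, so the perturbed
squeezing defect differs from the unperturbed one `b − a ≤ −δ I` by
`(1 − κ²) (V(Πu) − e^{2A} V(Πw))`. The first term is nonpositive because `V(Πu) ≤ 0`, and the
second is at most `(1 − κ²) M_P M_Π² e^{2A} ‖w‖²`, which the smallness condition on `κ` and the
lower bound on `I` turn into at most `(δ/2) I`. -/

theorem ContinuousLinearMap.norm_apply_apply_comp_le {𝕜 E F G : Type*} [NontriviallyNormedField 𝕜]
    [SeminormedAddCommGroup E] [NormedSpace 𝕜 E] [SeminormedAddCommGroup F] [NormedSpace 𝕜 F]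
    [SeminormedAddCommGroup G] [NormedSpace 𝕜 G]
    (P : F →L[𝕜] F →L[𝕜] G) (T : E →L[𝕜] F) (v : E) :
    ‖P (T v) (T v)‖ ≤ ‖P‖ * ‖T‖ ^ 2 * ‖v‖ ^ 2 :=
  calc ‖P (T v) (T v)‖ ≤ ‖P‖ * ‖T v‖ * ‖T v‖ := P.le_opNorm₂ _ _
    _ ≤ ‖P‖ * (‖T‖ * ‖v‖) * (‖T‖ * ‖v‖) := by gcongr <;> exact T.le_opNorm v
    _ = ‖P‖ * ‖T‖ ^ 2 * ‖v‖ ^ 2 := by ring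

theorem stmt_13_general {E : Type*} [NormedAddCommGroup E] [NormedSpace ℝ E]
    (P : E →L[ℝ] E →L[ℝ] ℝ)
    (Pi : E →L[ℝ] E)
    (MP MPi : ℝ) (hMP : ‖P‖ ≤ MP) (hMPi : ‖Pi‖ ≤ MPi)
    (horth : ∀ v : E, P v v = P (v - Pi v) (v - Pi v) + P (Pi v) (Pi v))
    (κ : ℝ) (hκ : κ ∈ Set.Ioo (0:ℝ) 1)
    (δ M τ L A a b I : ℝ) (hδ : 0 < δ)
    (u w : E)
    (ha : a = P u u) (hb : b = Real.exp (2 * A) * P w w)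
    (hsq : b - a ≤ -δ * I)
    (hPu : P (Pi u) (Pi u) ≤ 0)
    (hIlow : Real.exp (-2 * M * (τ + 1)) * Real.exp (2 * A) * L⁻¹ ^ 2 * ‖w‖ ^ 2 ≤ I)
    (hκcond : (1 - κ ^ 2) * MP * MPi ^ 2 <
      (δ / 2) * Real.exp (-2 * M * (τ + 1)) * L⁻¹ ^ 2) :
    Real.exp (2 * A) * (P (w - Pi w) (w - Pi w) + κ ^ 2 * P (Pi w) (Pi w)) -
      (P (u - Pi u) (u - Pi u) + κ ^ 2 * P (Pi u) (Pi u)) ≤ -(δ / 2) * I := by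
  have hκ2 : 0 ≤ 1 - κ ^ 2 := by nlinarith [hκ.1, hκ.2]
  have hPw : -P (Pi w) (Pi w) ≤ MP * MPi ^ 2 * ‖w‖ ^ 2 := by
    refine (neg_le_abs _).trans ((P.norm_apply_apply_comp_le Pi w).trans ?_)
    have := (norm_nonneg P).trans hMP
    gcongr
  have hPi_w : (1 - κ ^ 2) * Real.exp (2 * A) * -P (Pi w) (Pi w) ≤ δ / 2 * I :=
    calc (1 - κ ^ 2) * Real.exp (2 * A) * -P (Pi w) (Pi w)
        ≤ (1 - κ ^ 2) * Real.exp (2 * A) * (MP * MPi ^ 2 * ‖w‖ ^ 2) :=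
          mul_le_mul_of_nonneg_left hPw (mul_nonneg hκ2 (Real.exp_pos _).le)
      _ = (1 - κ ^ 2) * MP * MPi ^ 2 * (Real.exp (2 * A) * ‖w‖ ^ 2) := by ring
      _ ≤ δ / 2 * Real.exp (-2 * M * (τ + 1)) * L⁻¹ ^ 2 * (Real.exp (2 * A) * ‖w‖ ^ 2) := by
          gcongr
      _ = δ / 2 * (Real.exp (-2 * M * (τ + 1)) * Real.exp (2 * A) * L⁻¹ ^ 2 * ‖w‖ ^ 2) := by
          ring
      _ ≤ δ / 2 * I := by gcongr
  have hPi_u : (1 - κ ^ 2) * P (Pi u) (Pi u) ≤ 0 := mul_nonpos_of_nonneg_of_nonpos hκ2 hPu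
  subst ha hb
  linear_combination hsq + hPi_w + hPi_u - Real.exp (2 * A) * horth w + horth u

/-- algebraic core of the Cone Perturbation Lemma: the squeezing
inequality for `V` persists, with constant `δ/2`, for the perturbed quadratic form
`V^{(κ)} = V∘Π⁺ + κ² V∘Π` when `(1 − κ²) M_P M_Π² < (δ/2) e^{−2M(τ+1)} L⁻²`. -/
theorem stmt_13 {E : Type*} [NormedAddCommGroup E] [NormedSpace ℝ E]
    (P : E →L[ℝ] E →L[ℝ] ℝ)
    (hsymm : ∀ v₁ v₂ : E, P v₂ v₁ = P v₁ v₂)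
    (Pi : E →L[ℝ] E)
    (MP MPi : ℝ) (hMP : ‖P‖ ≤ MP) (hMPi : ‖Pi‖ ≤ MPi)
    (horth : ∀ v : E, P v v = P (v - Pi v) (v - Pi v) + P (Pi v) (Pi v))
    (κ : ℝ) (hκ : κ ∈ Set.Ioo (0:ℝ) 1)
    (δ M τ L A a b I : ℝ) (hδ : 0 < δ) (hM : 0 < M) (hτ : 0 < τ) (hL : 0 < L)
    (u w : E)
    (ha : a = P u u) (hb : b = Real.exp (2 * A) * P w w)
    (hI : 0 ≤ I)
    (hsq : b - a ≤ -δ * I)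
    (hPu : P (Pi u) (Pi u) ≤ 0)
    (hIlow : Real.exp (-2 * M * (τ + 1)) * Real.exp (2 * A) * L⁻¹ ^ 2 * ‖w‖ ^ 2 ≤ I)
    (hκcond : (1 - κ ^ 2) * MP * MPi ^ 2 <
      (δ / 2) * Real.exp (-2 * M * (τ + 1)) * L⁻¹ ^ 2) :
    Real.exp (2 * A) * (P (w - Pi w) (w - Pi w) + κ ^ 2 * P (Pi w) (Pi w)) -
      (P (u - Pi u) (u - Pi u) + κ ^ 2 * P (Pi u) (Pi u)) ≤ -(δ / 2) * I :=
  stmt_13_general P Pi MP MPi hMP hMPi horth κ hκ δ M τ L A a b I hδ u w ha hb hsq hPu hIlow hκcond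
end

section
/- Let (Q, θ) be a minimal almost periodic flow on a compact metric space Q, E a Banach space, and ψ a cocycle on E over θ. If for some q₀ ∈ Q and v₀ ∈ E the forward orbit {ψ^t(q₀, v₀) : t ≥ 0} lies in a compact set K ⊆ E, then for every q ∈ Q there exists a complete trajectory w : ℝ → E over q (i.e. w(t+s) = ψ^t(θ^s q, w(s)) for all t ≥ 0, s ∈ ℝ) with w(t) ∈ K for all t ∈ ℝ. -/
/-!
By minimality every point `q` lies in the ω-limit set of `q₀` (a nonempty, closed, invariant set
containing a dense orbit), so some ultrafilter `U ≤ atTop` on times has `θ^τ q₀ → q` along `U`.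
The shifted trajectories `τ ↦ ψ^{t+τ}(q₀, v₀)` eventually lie in the compact set `K`, hence
converge along `U` to some `w t ∈ K`; passing to the limit in
`ψ^{t+s+τ}(q₀, v₀) = ψ^t(θ^s θ^τ q₀, ψ^{s+τ}(q₀, v₀))` shows that `w` is a trajectory over `q`.
-/

open Filter Topology Set omegaLimit

section OmegaLimit

variable {Q : Type*} [TopologicalSpace Q] {θ : ℝ → Q → Q}

theorem isInvariant_omegaLimit_atTop (hθ : ∀ t, Continuous (θ t))
    (hθadd : ∀ t s q, θ (t + s) q = θ t (θ s q)) (S : Set Q) :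
    IsInvariant θ (ω atTop θ S) := fun t =>
  (mapsTo_omegaLimit (ϕ' := fun t' => θ (t + t')) S (mapsTo_id S)
      (fun t' q => (hθadd t t' q).symm) (hθ t)).mono_right
    (omegaLimit_subset_of_tendsto θ S (tendsto_atTop_add_const_left atTop t tendsto_id))

theorem IsInvariant.eq_univ_of_dense_orbits {S : Set Q} (hS : IsInvariant θ S)
    (hSc : IsClosed S) (hSne : S.Nonempty) (hmin : ∀ q, Dense (range fun t => θ t q)) :
    S = univ := by
  obtain ⟨x, hx⟩ := hSne
  have horbit : range (fun t => θ t x) ⊆ S := range_subset_iff.2 fun t => hS t hx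
  simpa [(hmin x).closure_eq] using hSc.closure_subset_iff.2 horbit

theorem mem_omegaLimit_of_dense_orbits [CompactSpace Q] (hθ : ∀ t, Continuous (θ t))
    (hθadd : ∀ t s q, θ (t + s) q = θ t (θ s q)) (hmin : ∀ q, Dense (range fun t => θ t q))
    (q₀ q : Q) : q ∈ ω atTop θ {q₀} := by
  rw [(isInvariant_omegaLimit_atTop hθ hθadd {q₀}).eq_univ_of_dense_orbits
    (isClosed_omegaLimit _ _ _)
    (nonempty_omegaLimit atTop θ {q₀} (singleton_nonempty q₀)) hmin]
  exact mem_univ q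

theorem exists_ultrafilter_tendsto_of_dense_orbits [CompactSpace Q]
    (hθ : ∀ t, Continuous (θ t)) (hθadd : ∀ t s q, θ (t + s) q = θ t (θ s q))
    (hmin : ∀ q, Dense (range fun t => θ t q)) (q₀ q : Q) :
    ∃ U : Ultrafilter ℝ, (U : Filter ℝ) ≤ atTop ∧ Tendsto (fun τ => θ τ q₀) (U : Filter ℝ) (𝓝 q) :=
  mapClusterPt_iff_ultrafilter.1 <| (mem_omegaLimit_singleton_iff_mapClusterPt _ _ _ _).1 <|
    mem_omegaLimit_of_dense_orbits hθ hθadd hmin q₀ q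

end OmegaLimit

section Cocycle

variable {Q E : Type*} [TopologicalSpace E]
  {θ : ℝ → Q → Q} {ψ : ℝ → Q → E → E} {q₀ q : Q} {v₀ : E}

theorem exists_tendsto_shifted_trajectory {K : Set E} (hK : IsCompact K)
    (horb : ∀ t, 0 ≤ t → ψ t q₀ v₀ ∈ K) {U : Ultrafilter ℝ} (hU : (U : Filter ℝ) ≤ atTop)
    (t : ℝ) :
    ∃ v ∈ K, Tendsto (fun τ => ψ (t + τ) q₀ v₀) (U : Filter ℝ) (𝓝 v) := by
  have hmem : ∀ᶠ τ in (U : Filter ℝ), ψ (t + τ) q₀ v₀ ∈ K :=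
    hU <| (eventually_ge_atTop (-t)).mono fun τ hτ => horb _ (by linarith)
  exact hK.ultrafilter_le_nhds' (U.map fun τ => ψ (t + τ) q₀ v₀) hmem

theorem limit_shifted_trajectory_eq_cocycle [TopologicalSpace Q] [T2Space E]
    {U : Filter ℝ} [U.NeBot] (hU : U ≤ atTop) (hθ : ∀ t, Continuous (θ t))
    (hθadd : ∀ t s q, θ (t + s) q = θ t (θ s q))
    (hψcont : ContinuousOn (fun p : ℝ × Q × E => ψ p.1 p.2.1 p.2.2) {p | 0 ≤ p.1})
    (hψadd : ∀ t s : ℝ, 0 ≤ t → 0 ≤ s → ∀ q v, ψ (t + s) q v = ψ t (θ s q) (ψ s q v))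
    (hq : Tendsto (fun τ => θ τ q₀) U (𝓝 q)) {w : ℝ → E}
    (hw : ∀ t, Tendsto (fun τ => ψ (t + τ) q₀ v₀) U (𝓝 (w t)))
    {t : ℝ} (ht : 0 ≤ t) (s : ℝ) : w (t + s) = ψ t (θ s q) (w s) := by
  have hargs : Tendsto (fun τ => ((t, θ s (θ τ q₀), ψ (s + τ) q₀ v₀) : ℝ × Q × E)) U
      (𝓝[{p | 0 ≤ p.1}] (t, θ s q, w s)) :=
    tendsto_nhdsWithin_iff.2
      ⟨tendsto_const_nhds.prodMk_nhds (((hθ s).tendsto q).comp hq |>.prodMk_nhds (hw s)),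
        .of_forall fun _ => ht⟩
  have hcocycle : ∀ᶠ τ in U, ψ t (θ s (θ τ q₀)) (ψ (s + τ) q₀ v₀) = ψ (t + s + τ) q₀ v₀ :=
    hU <| (eventually_ge_atTop (-s)).mono fun τ hτ => by
      rw [add_assoc, hψadd t (s + τ) ht (by linarith), hθadd]
  exact tendsto_nhds_unique (hw (t + s))
    (((hψcont _ ht).tendsto.comp hargs).congr' hcocycle)

end Cocycle

theorem stmt_18_general {Q E : Type*} [MetricSpace Q] [CompactSpace Q]
    [NormedAddCommGroup E]
    (θ : ℝ → Q → Q)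
    (hθcont : Continuous fun p : ℝ × Q => θ p.1 p.2)
    (hθadd : ∀ t s : ℝ, ∀ q, θ (t + s) q = θ t (θ s q))
    (hmin : ∀ q : Q, Dense (Set.range fun t : ℝ => θ t q))
    (ψ : ℝ → Q → E → E)
    (hψcont : ContinuousOn (fun p : ℝ × Q × E => ψ p.1 p.2.1 p.2.2)
      {p : ℝ × Q × E | 0 ≤ p.1})
    (hψadd : ∀ t s : ℝ, 0 ≤ t → 0 ≤ s → ∀ q v, ψ (t + s) q v = ψ t (θ s q) (ψ s q v))
    (q₀ : Q) (v₀ : E) (K : Set E) (hK : IsCompact K)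
    (horb : ∀ t : ℝ, 0 ≤ t → ψ t q₀ v₀ ∈ K) :
    ∀ q : Q, ∃ w : ℝ → E,
      (∀ t : ℝ, 0 ≤ t → ∀ s : ℝ, w (t + s) = ψ t (θ s q) (w s)) ∧
      (∀ t : ℝ, w t ∈ K) := by
  intro q
  have hθ : ∀ t, Continuous (θ t) := fun t => hθcont.comp (continuous_const.prodMk continuous_id)
  obtain ⟨U, hU, hq⟩ := exists_ultrafilter_tendsto_of_dense_orbits hθ hθadd hmin q₀ q
  choose w hwK hw using exists_tendsto_shifted_trajectory hK horb hU
  exact ⟨w, fun t ht s => limit_shifted_trajectory_eq_cocycle hU hθ hθadd hψcont hψadd hq hw ht s,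
    hwK⟩

/-- in a cocycle over a minimal almost periodic (equicontinuous) flow on
a compact metric space, a forward trajectory lying in a compact set `K` yields, over
every `q`, a complete trajectory lying in `K`. -/
theorem stmt_18 {Q E : Type*} [MetricSpace Q] [CompactSpace Q]
    [NormedAddCommGroup E] [NormedSpace ℝ E]
    (θ : ℝ → Q → Q)
    (hθcont : Continuous fun p : ℝ × Q => θ p.1 p.2)
    (hθ0 : ∀ q, θ 0 q = q)
    (hθadd : ∀ t s : ℝ, ∀ q, θ (t + s) q = θ t (θ s q))
    (hmin : ∀ q : Q, Dense (Set.range fun t : ℝ => θ t q))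
    (hap : Equicontinuous fun t : ℝ => θ t)
    (ψ : ℝ → Q → E → E)
    (hψcont : ContinuousOn (fun p : ℝ × Q × E => ψ p.1 p.2.1 p.2.2)
      {p : ℝ × Q × E | 0 ≤ p.1})
    (hψ0 : ∀ q v, ψ 0 q v = v)
    (hψadd : ∀ t s : ℝ, 0 ≤ t → 0 ≤ s → ∀ q v, ψ (t + s) q v = ψ t (θ s q) (ψ s q v))
    (q₀ : Q) (v₀ : E) (K : Set E) (hK : IsCompact K)
    (horb : ∀ t : ℝ, 0 ≤ t → ψ t q₀ v₀ ∈ K) :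
    ∀ q : Q, ∃ w : ℝ → E,
      (∀ t : ℝ, 0 ≤ t → ∀ s : ℝ, w (t + s) = ψ t (θ s q) (w s)) ∧
      (∀ t : ℝ, w t ∈ K) :=
  stmt_18_general θ hθcont hθadd hmin ψ hψcont hψadd q₀ v₀ K hK horb
end
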